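/- Let the filtration (𝓕_n)_{n∈ℕ} on (Ω, 𝓕) satisfy condition A, and let M be a convex set of mutually equivalent probability measures such that P(A_s^n) > 0 for all P ∈ M, s, n, and there exists a measure P_{i₀} ∈ M with P(A_j^{n+1})/P(A_s^n) ≤ P_{i₀}(A_j^{n+1})/P_{i₀}(A_s^n) for all P ∈ M, all n, all s and all j ∈ I_s^n. Let ξ ∈ G₀ = {ξ ≥ 0 : E^P ξ = 1 for all P ∈ M}, and let (f_m) be an adapted process with f_m ≤ f_{m−1} a.s. and E^P[ξ |f_m|] < ∞ for all m ≥ 1 and P ∈ M. Then the process (f_m E^P[ξ | 𝓕_m])_{m∈ℕ} is a local regular supermartingale relative to M; explicitly, setting ḡ⁰_m = (f_{m−1} − f_m) E^P[ξ | 𝓕_m] ≥ 0, the process f_m E^P[ξ | 𝓕_m] + Σ_{i=1}^m ḡ⁰_i is a martingale relative to every measure in M. -/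

import Mathlib

/-! The domination hypothesis forces every `P ∈ M` to have the same conditional cell
probabilities `P(A_j^{n+1}) / P(A_s^n)` as `P_{i₀}`: for fixed `s`, both families sum to one
over `j ∈ I_s^n`. Two measures of `M` are therefore proportional on every cell (the cells form a
π-system generating `𝓕`), and since `E^P[ξ | 𝓕_n]` is the average of `ξ` over the cell
containing `ω`, it does not depend on `P`. For this common martingale `X`, the process
`f_m X_m + ∑_{i ≤ m} (f_{i-1} - f_i) X_i` has increments `f_{m-1} (X_m - X_{m-1})`, which have
zero conditional mean because `f_{m-1}` is `𝓕_{m-1}`-measurable; the compensator is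
non-negative because `f` is non-increasing and `ξ ≥ 0`. -/

open MeasureTheory Filter Set
open scoped ENNReal

/-- **Condition A** of the paper. -/
structure CondA {Ω : Type*} (m0 : MeasurableSpace Ω) (ℱ : MeasureTheory.Filtration ℕ m0)
    (A : ℕ → ℕ → Set Ω) (I : ℕ → ℕ → Set ℕ) : Prop where
  gen_top : (⨆ n, (ℱ n : MeasurableSpace Ω)) = m0
  gen : ∀ n, (ℱ n : MeasurableSpace Ω) = MeasurableSpace.generateFrom (Set.range (A n))
  disj : ∀ n, Pairwise (Function.onFun Disjoint (A n))
  cover : ∀ n, (⋃ s, A n s) = Set.univ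
  idisj : ∀ n, Pairwise (Function.onFun Disjoint (I n))
  icover : ∀ n, (⋃ s, I n s) = Set.univ
  refines : ∀ n s, A n s = ⋃ j ∈ I n s, A (n + 1) j

theorem eq_of_le_of_hasSum {ι α : Type*} [AddCommGroup α] [PartialOrder α]
    [IsOrderedAddMonoid α] [TopologicalSpace α] [IsTopologicalAddGroup α] [OrderClosedTopology α]
    {f g : ι → α} {a : α} (hfg : f ≤ g) (hf : HasSum f a) (hg : HasSum g a) : f = g :=
  funext fun i => (hfg i).eq_of_not_lt fun hi => (hasSum_lt hfg hi hf hg).false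

theorem MeasurableSpace.subset_or_disjoint_of_measurableSet_generateFrom {Ω ι : Type*}
    {A : ι → Set Ω} (hA : Pairwise (Function.onFun Disjoint A)) {B : Set Ω}
    (hB : MeasurableSet[generateFrom (range A)] B) (s : ι) : A s ⊆ B ∨ Disjoint (A s) B := by
  induction B, hB using generateFrom_induction with
  | hC _ ht =>
    obtain ⟨t, rfl⟩ := ht
    by_cases hst : s = t
    · exact .inl (hst ▸ subset_rfl)
    · exact .inr (hA hst)
  | empty => exact .inr (disjoint_empty _)
  | compl B _ hB =>
    rcases hB with hB | hB
    · exact .inr (disjoint_compl_right_iff_subset.2 hB)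
    · exact .inl hB.subset_compl_right
  | iUnion B _ hB =>
    by_cases h : ∃ i, A s ⊆ B i
    · obtain ⟨i, hi⟩ := h
      exact .inl (hi.trans (subset_iUnion B i))
    · simp only [not_exists] at h
      exact .inr (disjoint_iUnion_right.2 fun i => (hB i).resolve_left (h i))

theorem Measurable.eq_of_mem_of_generateFrom_partition {Ω ι β : Type*} [MeasurableSpace β]
    [MeasurableSingletonClass β] {A : ι → Set Ω} (hA : Pairwise (Function.onFun Disjoint A))
    {u : Ω → β} (hu : Measurable[MeasurableSpace.generateFrom (range A)] u) {s : ι} {ω ω' : Ω}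
    (hω : ω ∈ A s) (hω' : ω' ∈ A s) : u ω' = u ω := by
  rcases MeasurableSpace.subset_or_disjoint_of_measurableSet_generateFrom hA
    (hu (measurableSet_singleton (u ω))) s with h | h
  · exact h hω'
  · exact absurd (rfl : u ω = u ω) (disjoint_left.1 h hω)

section Decomposition

variable {Ω : Type*} {m0 : MeasurableSpace Ω} {μ : Measure Ω} {ξ φ : Ω → ℝ}

theorem integrable_mul_condExp {m : MeasurableSpace Ω}
    (hφ : StronglyMeasurable[m] φ) (hφξ : Integrable (φ * ξ) μ) (hξ : Integrable ξ μ) :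
    Integrable (φ * μ[ξ | m]) μ :=
  integrable_condExp.congr (condExp_mul_of_stronglyMeasurable_left hφ hφξ hξ)

theorem condExp_mul_condExp_of_le [IsFiniteMeasure μ] {m m' : MeasurableSpace Ω} (hmm' : m ≤ m')
    (hm' : m' ≤ m0) (hφ : StronglyMeasurable[m] φ) (hφξ : Integrable (φ * ξ) μ)
    (hξ : Integrable ξ μ) :
    μ[φ * μ[ξ | m'] | m] =ᵐ[μ] φ * μ[ξ | m] :=
  calc μ[φ * μ[ξ | m'] | m]
      =ᵐ[μ] μ[μ[φ * ξ | m'] | m] :=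
        condExp_congr_ae (condExp_mul_of_stronglyMeasurable_left (hφ.mono hmm') hφξ hξ).symm
    _ =ᵐ[μ] μ[φ * ξ | m] := condExp_condExp_of_le hmm' hm'
    _ =ᵐ[μ] φ * μ[ξ | m] := condExp_mul_of_stronglyMeasurable_left hφ hφξ hξ

variable {ℱ : Filtration ℕ m0} {f : ℕ → Ω → ℝ}

theorem martingale_mul_condExp_add_sum [IsFiniteMeasure μ] (hf : Adapted ℱ f)
    (hξ : Integrable ξ μ) (hfξ : ∀ i, Integrable (f i * ξ) μ) :
    Martingale (fun m ω => f m ω * μ[ξ | ℱ m] ω +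
      ∑ i ∈ Finset.range m, (f i ω - f (i + 1) ω) * μ[ξ | ℱ (i + 1)] ω) ℱ μ := by
  have hsm : ∀ i m, i ≤ m → StronglyMeasurable[ℱ m] (f i) := fun i m him =>
    (hf.measurable_le him).stronglyMeasurable
  have hint : ∀ i m, i ≤ m → Integrable (f i * μ[ξ | ℱ m]) μ := fun i m him =>
    integrable_mul_condExp (hsm i m him) (hfξ i) hξ
  set S : ℕ → Ω → ℝ := fun m ω =>
    ∑ i ∈ Finset.range m, (f i ω - f (i + 1) ω) * μ[ξ | ℱ (i + 1)] ω with hS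
  have hS_sm : ∀ m, StronglyMeasurable[ℱ m] (S m) := fun m =>
    Finset.stronglyMeasurable_fun_sum _ fun i hi =>
      have him : i + 1 ≤ m := Finset.mem_range.1 hi
      ((hsm i m (by omega)).sub (hsm (i + 1) m him)).mul
        (stronglyMeasurable_condExp.mono (ℱ.mono him))
  have hS_int : ∀ m, Integrable (S m) μ := fun m =>
    integrable_finsetSum _ fun i _ => by
      have := (hint i (i + 1) (by omega)).sub (hint (i + 1) (i + 1) le_rfl)
      rwa [← sub_mul] at this
  refine martingale_nat (fun m => ((hsm m m le_rfl).mul stronglyMeasurable_condExp).add (hS_sm m))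
    (fun m => (hint m m le_rfl).add (hS_int m)) fun m => ?_
  have hsucc : (fun ω => f (m + 1) ω * μ[ξ | ℱ (m + 1)] ω + S (m + 1) ω)
      = f m * μ[ξ | ℱ (m + 1)] + S m := by
    funext ω
    simp only [hS, Finset.sum_range_succ, Pi.add_apply, Pi.mul_apply]
    ring
  rw [hsucc]
  filter_upwards [condExp_add (hint m (m + 1) (by omega)) (hS_int m) (ℱ m),
    condExp_mul_condExp_of_le (ℱ.mono m.le_succ) (ℱ.le (m + 1)) (hsm m m le_rfl) (hfξ m) hξ]
    with ω h₁ h₂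
  rw [h₁, Pi.add_apply, h₂, condExp_of_stronglyMeasurable (ℱ.le m) (hS_sm m) (hS_int m)]
  rfl

/-- The compensator is replaced by the sum of positive parts of `D`, which is monotone at every
point and agrees with `∑ D i` almost surely. -/
theorem exists_martingale_sub_monotone {M : Set (Measure Ω)}
    {Z D : ℕ → Ω → ℝ} (hD : ∀ i, Measurable[ℱ (i + 1)] (D i))
    (hD_nonneg : ∀ Q ∈ M, ∀ i, 0 ≤ᵐ[Q] D i)
    (hZD : ∀ Q ∈ M, Martingale (fun m ω => Z m ω + ∑ i ∈ Finset.range m, D i ω) ℱ Q) :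
    ∃ Mart g : ℕ → Ω → ℝ, (∀ Q ∈ M, Martingale Mart ℱ Q) ∧ Adapted ℱ g ∧ (∀ ω, g 0 ω = 0) ∧
      (∀ ω, Monotone fun m => g m ω) ∧ ∀ Q ∈ M, ∀ m, Z m =ᵐ[Q] fun ω => Mart m ω - g m ω := by
  set g : ℕ → Ω → ℝ := fun m ω => ∑ i ∈ Finset.range m, max (D i ω) 0
  have hD_le : ∀ m, ∀ i ∈ Finset.range m, Measurable[ℱ m] (D i) := fun m i hi =>
    (hD i).mono (ℱ.mono (Finset.mem_range.1 hi)) le_rfl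
  have hg : Adapted ℱ g := fun m =>
    Finset.measurable_fun_sum _ fun i hi => (hD_le m i hi).max measurable_const
  refine ⟨fun m ω => Z m ω + g m ω, g, fun Q hQ => ?_, hg, fun ω => by simp [g],
    fun ω => monotone_nat_of_le_succ fun m => ?_, fun Q hQ m => .of_forall fun ω => by simp⟩
  · have hZ := hZD Q hQ
    refine hZ.congr (fun m => ?_) fun m => ?_
    · have hsum : Measurable[ℱ m] fun ω => ∑ i ∈ Finset.range m, D i ω :=
        Finset.measurable_fun_sum _ (hD_le m)
      have hsplit : (fun ω => Z m ω + g m ω)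
          = fun ω => (Z m ω + ∑ i ∈ Finset.range m, D i ω) - ∑ i ∈ Finset.range m, D i ω
            + g m ω := by
        funext ω; ring
      rw [hsplit]
      exact ((hZ.stronglyMeasurable m).sub hsum.stronglyMeasurable).add (hg m).stronglyMeasurable
    · filter_upwards [ae_all_iff.2 (hD_nonneg Q hQ)] with ω hω
      exact congrArg (Z m ω + ·) (Finset.sum_congr rfl fun i _ => (max_eq_left (hω i)).symm)
  · simp only [g, Finset.sum_range_succ]
    exact le_add_of_nonneg_right (le_max_right _ _)

end Decomposition

namespace CondA

variable {Ω : Type*} {m0 : MeasurableSpace Ω} {ℱ : Filtration ℕ m0} {A : ℕ → ℕ → Set Ω}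
  {I : ℕ → ℕ → Set ℕ}

theorem measurableSet_cell (hA : CondA m0 ℱ A I) (n s : ℕ) : MeasurableSet[ℱ n] (A n s) := by
  rw [hA.gen n]
  exact MeasurableSpace.measurableSet_generateFrom ⟨s, rfl⟩

theorem exists_mem_cell (hA : CondA m0 ℱ A I) (n : ℕ) (ω : Ω) : ∃ s, ω ∈ A n s :=
  mem_iUnion.1 (hA.cover n ▸ mem_univ ω)

theorem eq_of_mem_cell (hA : CondA m0 ℱ A I) {n s t : ℕ} {ω : Ω} (hs : ω ∈ A n s)
    (ht : ω ∈ A n t) : s = t :=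
  by_contra fun hst => disjoint_left.1 (hA.disj n hst) hs ht

theorem exists_mem_index (hA : CondA m0 ℱ A I) (n j : ℕ) : ∃ s, j ∈ I n s :=
  mem_iUnion.1 (hA.icover n ▸ mem_univ j)

theorem cell_subset_of_mem_index (hA : CondA m0 ℱ A I) {n s j : ℕ} (hj : j ∈ I n s) :
    A (n + 1) j ⊆ A n s :=
  hA.refines n s ▸ subset_biUnion_of_mem hj

theorem cell_subset_of_le (hA : CondA m0 ℱ A I) {n m s t : ℕ} {ω : Ω} (hnm : n ≤ m)
    (hs : ω ∈ A n s) (ht : ω ∈ A m t) : A m t ⊆ A n s := by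
  induction m, hnm using Nat.le_induction generalizing t with
  | base => rw [hA.eq_of_mem_cell hs ht]
  | succ m _ ih =>
    obtain ⟨p, hp⟩ := hA.exists_mem_index m t
    have htp := hA.cell_subset_of_mem_index hp
    exact htp.trans (ih (htp ht))

theorem isPiSystem_cells (hA : CondA m0 ℱ A I) : IsPiSystem (range (Function.uncurry A)) := by
  rintro _ ⟨⟨n, s⟩, rfl⟩ _ ⟨⟨m, t⟩, rfl⟩ ⟨ω, hs, ht⟩
  rcases le_total n m with h | h
  · exact ⟨(m, t), (inter_eq_right.2 (hA.cell_subset_of_le h hs ht)).symm⟩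
  · exact ⟨(n, s), (inter_eq_left.2 (hA.cell_subset_of_le h ht hs)).symm⟩

theorem generateFrom_cells (hA : CondA m0 ℱ A I) :
    MeasurableSpace.generateFrom (range (Function.uncurry A)) = m0 := by
  refine le_antisymm (MeasurableSpace.generateFrom_le ?_) ?_
  · rintro _ ⟨⟨n, s⟩, rfl⟩
    exact ℱ.le n _ (hA.measurableSet_cell n s)
  · rw [← hA.gen_top]
    refine iSup_le fun n => ?_
    rw [hA.gen n]
    exact MeasurableSpace.generateFrom_mono (by rintro _ ⟨s, rfl⟩; exact ⟨(n, s), rfl⟩)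

theorem hasSum_measureReal_children (hA : CondA m0 ℱ A I) (R : Measure Ω)
    [IsFiniteMeasure R] (n s : ℕ) :
    HasSum (fun j : I n s => R.real (A (n + 1) j)) (R.real (A n s)) := by
  have hsum : ∑' j : I n s, R (A (n + 1) j) = R (A n s) := by
    rw [hA.refines n s, measure_biUnion (to_countable _)
      (fun i _ j _ hij => hA.disj (n + 1) hij) fun j _ => ℱ.le _ _ (hA.measurableSet_cell _ j)]
  have := ENNReal.hasSum_toReal (hsum ▸ measure_ne_top R (A n s))
  rwa [← ENNReal.tsum_toReal_eq fun j => measure_ne_top R _, hsum] at this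

theorem hasSum_measureReal_div_children (hA : CondA m0 ℱ A I) (R : Measure Ω)
    [IsFiniteMeasure R] {n s : ℕ} (hR : R (A n s) ≠ 0) :
    HasSum (fun j : I n s => R.real (A (n + 1) j) / R.real (A n s)) 1 :=
  div_self ((measureReal_ne_zero_iff).2 hR) ▸
    (hA.hasSum_measureReal_children R n s).div_const (R.real (A n s))

theorem measureReal_div_eq_of_le (hA : CondA m0 ℱ A I) {R R₀ : Measure Ω} [IsFiniteMeasure R]
    [IsFiniteMeasure R₀] {n s : ℕ} (hR : R (A n s) ≠ 0) (hR₀ : R₀ (A n s) ≠ 0)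
    (hle : ∀ j ∈ I n s, R.real (A (n + 1) j) / R.real (A n s) ≤
      R₀.real (A (n + 1) j) / R₀.real (A n s)) {j : ℕ} (hj : j ∈ I n s) :
    R.real (A (n + 1) j) / R.real (A n s) = R₀.real (A (n + 1) j) / R₀.real (A n s) := by
  have key := eq_of_le_of_hasSum (fun j : I n s => hle j.1 j.2)
    (hA.hasSum_measureReal_div_children R hR) (hA.hasSum_measureReal_div_children R₀ hR₀)
  exact congrFun key ⟨j, hj⟩

section TwoMeasures

variable {P Q : Measure Ω} [IsFiniteMeasure P]

theorem measureReal_mul_eq_of_subset (hA : CondA m0 ℱ A I) (hP : ∀ n s, P (A n s) ≠ 0)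
    (hPQ : ∀ n s j, j ∈ I n s →
      Q.real (A (n + 1) j) * P.real (A n s) = P.real (A (n + 1) j) * Q.real (A n s))
    {n m s t : ℕ} (hnm : n ≤ m) (hts : A m t ⊆ A n s) :
    Q.real (A m t) * P.real (A n s) = P.real (A m t) * Q.real (A n s) := by
  obtain ⟨ω, hω⟩ := nonempty_of_measure_ne_zero (hP m t)
  induction m, hnm using Nat.le_induction generalizing t with
  | base => rw [hA.eq_of_mem_cell (hts hω) hω, mul_comm]
  | succ m hnm ih =>
    obtain ⟨p, hp⟩ := hA.exists_mem_index m t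
    have htp := hA.cell_subset_of_mem_index hp
    have hps := hA.cell_subset_of_le hnm (hts hω) (htp hω)
    have hP' : P.real (A m p) ≠ 0 := (measureReal_ne_zero_iff).2 (hP m p)
    apply mul_left_cancel₀ hP'
    linear_combination P.real (A n s) * hPQ m p t hp + P.real (A (m + 1) t) * ih hps (htp hω)

theorem smul_restrict_cell_eq [IsFiniteMeasure Q] (hA : CondA m0 ℱ A I)
    (hP : ∀ n s, P (A n s) ≠ 0)
    (hPQ : ∀ n s j, j ∈ I n s →
      Q.real (A (n + 1) j) * P.real (A n s) = P.real (A (n + 1) j) * Q.real (A n s))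
    (n s : ℕ) : P (A n s) • Q.restrict (A n s) = Q (A n s) • P.restrict (A n s) := by
  refine Measure.ext_of_generateFrom_of_iUnion _ (A 0) hA.generateFrom_cells.symm
    hA.isPiSystem_cells (hA.cover 0) (fun i => ⟨(0, i), rfl⟩)
    (fun i => by simp [ENNReal.mul_eq_top]) ?_
  rintro _ ⟨⟨m, t⟩, rfl⟩
  simp only [Function.uncurry_apply_pair, Measure.smul_apply, smul_eq_mul,
    Measure.restrict_apply (ℱ.le m _ (hA.measurableSet_cell m t))]
  rcases (A m t ∩ A n s).eq_empty_or_nonempty with h | ⟨ω, ht, hs⟩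
  · simp [h]
  rw [← ENNReal.toReal_eq_toReal_iff' (by finiteness) (by finiteness), ENNReal.toReal_mul,
    ENNReal.toReal_mul]
  simp only [← measureReal_def]
  rcases le_total n m with h | h
  · rw [inter_eq_left.2 (hA.cell_subset_of_le h hs ht)]
    linear_combination hA.measureReal_mul_eq_of_subset hP hPQ h (hA.cell_subset_of_le h hs ht)
  · rw [inter_eq_right.2 (hA.cell_subset_of_le h ht hs), mul_comm]

theorem measureReal_mul_condExp_eq_setIntegral (hA : CondA m0 ℱ A I) {ξ : Ω → ℝ}
    (hξ : Integrable ξ P) {n s : ℕ} {ω : Ω} (hω : ω ∈ A n s) :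
    P.real (A n s) * P[ξ | ℱ n] ω = ∫ x in A n s, ξ x ∂P := by
  have hmeas : Measurable[MeasurableSpace.generateFrom (range (A n))] (P[ξ | ℱ n]) :=
    hA.gen n ▸ stronglyMeasurable_condExp.measurable
  rw [← setIntegral_condExp (ℱ.le n) hξ (hA.measurableSet_cell n s),
    setIntegral_congr_fun (ℱ.le n _ (hA.measurableSet_cell n s))
      fun x hx => hmeas.eq_of_mem_of_generateFrom_partition (hA.disj n) hω hx,
    setIntegral_const, smul_eq_mul]

theorem condExp_eq_of_measureReal_mul_eq [IsFiniteMeasure Q] (hA : CondA m0 ℱ A I)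
    (hP : ∀ n s, P (A n s) ≠ 0) (hQ : ∀ n s, Q (A n s) ≠ 0)
    (hPQ : ∀ n s j, j ∈ I n s →
      Q.real (A (n + 1) j) * P.real (A n s) = P.real (A (n + 1) j) * Q.real (A n s))
    {ξ : Ω → ℝ} (hξP : Integrable ξ P) (hξQ : Integrable ξ Q) (n : ℕ) :
    P[ξ | ℱ n] = Q[ξ | ℱ n] := by
  funext ω
  obtain ⟨s, hω⟩ := hA.exists_mem_cell n ω
  have hint : P.real (A n s) * ∫ x in A n s, ξ x ∂Q = Q.real (A n s) * ∫ x in A n s, ξ x ∂P := by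
    simpa [integral_smul_measure, measureReal_def] using
      congrArg (fun μ => ∫ x, ξ x ∂μ) (hA.smul_restrict_cell_eq hP hPQ n s)
  apply mul_left_cancel₀ (mul_ne_zero ((measureReal_ne_zero_iff).2 (hP n s))
    ((measureReal_ne_zero_iff).2 (hQ n s)))
  linear_combination Q.real (A n s) * hA.measureReal_mul_condExp_eq_setIntegral hξP hω
    - P.real (A n s) * hA.measureReal_mul_condExp_eq_setIntegral hξQ hω - hint

theorem condExp_eq_of_measureReal_div_le [IsFiniteMeasure Q] (hA : CondA m0 ℱ A I)
    {R₀ : Measure Ω} [IsFiniteMeasure R₀] (hP : ∀ n s, P (A n s) ≠ 0)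
    (hQ : ∀ n s, Q (A n s) ≠ 0) (hR₀ : ∀ n s, R₀ (A n s) ≠ 0)
    (hPR₀ : ∀ n s j, j ∈ I n s →
      P.real (A (n + 1) j) / P.real (A n s) ≤ R₀.real (A (n + 1) j) / R₀.real (A n s))
    (hQR₀ : ∀ n s j, j ∈ I n s →
      Q.real (A (n + 1) j) / Q.real (A n s) ≤ R₀.real (A (n + 1) j) / R₀.real (A n s))
    {ξ : Ω → ℝ} (hξP : Integrable ξ P) (hξQ : Integrable ξ Q) (n : ℕ) :
    P[ξ | ℱ n] = Q[ξ | ℱ n] := by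
  refine hA.condExp_eq_of_measureReal_mul_eq hP hQ (fun n s j hj => ?_) hξP hξQ n
  rw [← div_eq_div_iff ((measureReal_ne_zero_iff).2 (hQ n s))
    ((measureReal_ne_zero_iff).2 (hP n s))]
  exact (hA.measureReal_div_eq_of_le (hQ n s) (hR₀ n s) (hQR₀ n s) hj).trans
    (hA.measureReal_div_eq_of_le (hP n s) (hR₀ n s) (hPR₀ n s) hj).symm

end TwoMeasures

end CondA

theorem stmt17_general {Ω : Type*} {m0 : MeasurableSpace Ω}
    (ℱ : Filtration ℕ m0) (A : ℕ → ℕ → Set Ω) (I : ℕ → ℕ → Set ℕ)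
    (hA : CondA m0 ℱ A I)
    (M : Set (Measure Ω))
    (hM_prob : ∀ P ∈ M, IsProbabilityMeasure P)
    (hpos : ∀ P ∈ M, ∀ n s : ℕ, 0 < P (A n s))
    (Pi0 : Measure Ω) (hPi0 : Pi0 ∈ M)
    (hdom : ∀ P ∈ M, ∀ n s j : ℕ, j ∈ I n s →
      (P (A (n + 1) j)).toReal / (P (A n s)).toReal ≤
      (Pi0 (A (n + 1) j)).toReal / (Pi0 (A n s)).toReal)
    (ξ : Ω → ℝ) (hξ_nonneg : ∀ ω, 0 ≤ ξ ω)
    (hξ_int : ∀ P ∈ M, Integrable ξ P)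
    (f : ℕ → Ω → ℝ) (hf_adapted : Adapted ℱ f)
    (hf_dec : ∀ P ∈ M, ∀ m : ℕ, f (m + 1) ≤ᵐ[P] f m)
    (hfξ_int : ∀ P ∈ M, ∀ m : ℕ, Integrable (fun ω => ξ ω * |f m ω|) P) :
    ∀ P ∈ M,
      (∀ Q ∈ M, ∀ m : ℕ, ∀ᵐ ω ∂Q,
        0 ≤ (f m ω - f (m + 1) ω) * (P[ξ | ℱ (m + 1)]) ω) ∧
      (∀ Q ∈ M, ∀ m : ℕ,
        (Q[(fun ω => f (m + 1) ω * (P[ξ | ℱ (m + 1)]) ω +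
            ∑ i ∈ Finset.range (m + 1),
              (f i ω - f (i + 1) ω) * (P[ξ | ℱ (i + 1)]) ω) | ℱ m]) =ᵐ[Q]
        fun ω => f m ω * (P[ξ | ℱ m]) ω +
          ∑ i ∈ Finset.range m, (f i ω - f (i + 1) ω) * (P[ξ | ℱ (i + 1)]) ω) ∧
      (∃ Mart g : ℕ → Ω → ℝ,
        (∀ Q ∈ M, Martingale Mart ℱ Q) ∧
        Adapted ℱ g ∧ (∀ ω, g 0 ω = 0) ∧ (∀ ω, Monotone fun m => g m ω) ∧
        ∀ Q ∈ M, ∀ m : ℕ,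
          (fun ω => f m ω * (P[ξ | ℱ m]) ω) =ᵐ[Q] fun ω => Mart m ω - g m ω) := by
  intro P hP
  have hX : ∀ Q ∈ M, ∀ n, P[ξ | ℱ n] = Q[ξ | ℱ n] := by
    intro Q hQ
    have := hM_prob P hP
    have := hM_prob Q hQ
    have := hM_prob Pi0 hPi0
    exact hA.condExp_eq_of_measureReal_div_le (fun n s => (hpos P hP n s).ne')
      (fun n s => (hpos Q hQ n s).ne') (fun n s => (hpos Pi0 hPi0 n s).ne') (hdom P hP)
      (hdom Q hQ) (hξ_int P hP) (hξ_int Q hQ)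
  have hfξ : ∀ Q ∈ M, ∀ i, Integrable (f i * ξ) Q := fun Q hQ i =>
    (hfξ_int Q hQ i).mono'
      (hf_adapted.measurable.aestronglyMeasurable.mul (hξ_int Q hQ).aestronglyMeasurable)
      (.of_forall fun ω => by simp [abs_of_nonneg (hξ_nonneg ω), mul_comm])
  have hmart : ∀ Q ∈ M, Martingale (fun m ω => f m ω * P[ξ | ℱ m] ω +
      ∑ i ∈ Finset.range m, (f i ω - f (i + 1) ω) * P[ξ | ℱ (i + 1)] ω) ℱ Q := by
    intro Q hQ
    have := hM_prob Q hQ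
    simp only [hX Q hQ]
    exact martingale_mul_condExp_add_sum hf_adapted (hξ_int Q hQ) (hfξ Q hQ)
  have hnonneg : ∀ Q ∈ M, ∀ m, ∀ᵐ ω ∂Q, 0 ≤ (f m ω - f (m + 1) ω) * P[ξ | ℱ (m + 1)] ω := by
    intro Q hQ m
    rw [hX Q hQ]
    filter_upwards [hf_dec Q hQ m, condExp_nonneg (m := ℱ (m + 1)) (.of_forall hξ_nonneg)]
      with ω hfω hξω
    exact mul_nonneg (sub_nonneg.2 hfω) hξω
  refine ⟨hnonneg, fun Q hQ m => (hmart Q hQ).condExp_ae_eq m.le_succ,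
    exists_martingale_sub_monotone (fun i => ?_) hnonneg hmart⟩
  exact ((hf_adapted.measurable_le i.le_succ).sub (hf_adapted (i + 1))).mul
    stronglyMeasurable_condExp.measurable

/-- **Theorem `mmars1` of the paper.**
Under condition A, for a convex set `M` of mutually equivalent probability measures
charging all partition cells and dominated on cells by some `P i₀ ∈ M`, for
`ξ ∈ G₀ = {ξ ≥ 0 : E^P ξ = 1, P ∈ M}` and an adapted a.s. non-increasing process
`f` with `E^P (ξ |f m|) < ∞`, the process `(f m ⬝ E^P[ξ | ℱ m])_m` is a local
regular supermartingale relative to `M` : setting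
`ḡ m = (f (m-1) - f m) E^P[ξ | ℱ m] ≥ 0`, the process
`f m ⬝ E^P[ξ | ℱ m] + ∑_{i=1}^m ḡ i` is a martingale relative to every measure in `M`. -/
theorem stmt17 {Ω : Type*} {m0 : MeasurableSpace Ω}
    (ℱ : Filtration ℕ m0) (A : ℕ → ℕ → Set Ω) (I : ℕ → ℕ → Set ℕ)
    (hA : CondA m0 ℱ A I)
    (M : Set (Measure Ω)) (hMne : M.Nonempty)
    (hM_prob : ∀ P ∈ M, IsProbabilityMeasure P)
    (hM_conv : ∀ P ∈ M, ∀ Q ∈ M, ∀ α : ℝ, 0 ≤ α → α ≤ 1 →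
      (ENNReal.ofReal (1 - α)) • P + (ENNReal.ofReal α) • Q ∈ M)
    (hM_equiv : ∀ P ∈ M, ∀ Q ∈ M, P ≪ Q)
    (hpos : ∀ P ∈ M, ∀ n s : ℕ, 0 < P (A n s))
    (Pi0 : Measure Ω) (hPi0 : Pi0 ∈ M)
    (hdom : ∀ P ∈ M, ∀ n s j : ℕ, j ∈ I n s →
      (P (A (n + 1) j)).toReal / (P (A n s)).toReal ≤
      (Pi0 (A (n + 1) j)).toReal / (Pi0 (A n s)).toReal)
    (ξ : Ω → ℝ) (hξ_nonneg : ∀ ω, 0 ≤ ξ ω)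
    (hξ_int : ∀ P ∈ M, Integrable ξ P)
    (hξ_exp : ∀ P ∈ M, ∫ ω, ξ ω ∂P = 1)
    (f : ℕ → Ω → ℝ) (hf_adapted : Adapted ℱ f)
    (hf_dec : ∀ P ∈ M, ∀ m : ℕ, f (m + 1) ≤ᵐ[P] f m)
    (hfξ_int : ∀ P ∈ M, ∀ m : ℕ, Integrable (fun ω => ξ ω * |f m ω|) P) :
    ∀ P ∈ M,
      (∀ Q ∈ M, ∀ m : ℕ, ∀ᵐ ω ∂Q,
        0 ≤ (f m ω - f (m + 1) ω) * (P[ξ | ℱ (m + 1)]) ω) ∧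
      (∀ Q ∈ M, ∀ m : ℕ,
        (Q[(fun ω => f (m + 1) ω * (P[ξ | ℱ (m + 1)]) ω +
            ∑ i ∈ Finset.range (m + 1),
              (f i ω - f (i + 1) ω) * (P[ξ | ℱ (i + 1)]) ω) | ℱ m]) =ᵐ[Q]
        fun ω => f m ω * (P[ξ | ℱ m]) ω +
          ∑ i ∈ Finset.range m, (f i ω - f (i + 1) ω) * (P[ξ | ℱ (i + 1)]) ω) ∧
      (∃ Mart g : ℕ → Ω → ℝ,
        (∀ Q ∈ M, Martingale Mart ℱ Q) ∧
        Adapted ℱ g ∧ (∀ ω, g 0 ω = 0) ∧ (∀ ω, Monotone fun m => g m ω) ∧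
        ∀ Q ∈ M, ∀ m : ℕ,
          (fun ω => f m ω * (P[ξ | ℱ m]) ω) =ᵐ[Q] fun ω => Mart m ω - g m ω) :=
  stmt17_general ℱ A I hA M hM_prob hpos Pi0 hPi0 hdom ξ hξ_nonneg hξ_int f hf_adapted hf_dec
    hfξ_int
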